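/- Let q ∈ ℂ with 0 < |q| < 1, and let a, b, D be elements of a unital ℂ-star-algebra satisfying the U_q(2) relations. Then for every m ∈ ℕ: aᵐ(a*)ᵐ = Σ_{k=0}^{m} (−1)ᵏ · binom(m,k)_{|q|²} · |q|^{k²+k−2km} · (bb*)ᵏ, and (a*)ᵐaᵐ = Σ_{k=0}^{m} (−1)ᵏ · binom(m,k)_{|q|²} · |q|^{k²+k} · (bb*)ᵏ. -/

import Mathlib

open scoped ComplexConjugate

noncomputable section

/-- The q-Pochhammer symbol `(α; t)_n = Π_{r=0}^{n-1} (1 - α tʳ)`. -/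
noncomputable def qPoch (α t : ℂ) (n : ℕ) : ℂ := ∏ r ∈ Finset.range n, (1 - α * t ^ r)

/-- The Gaussian binomial coefficient `binom(n,m)_t = (t;t)_n / ((t;t)_m (t;t)_{n-m})`. -/
noncomputable def qBinom (t : ℂ) (n m : ℕ) : ℂ :=
  qPoch t t n / (qPoch t t m * qPoch t t (n - m))

/-- Elements `a, b, D` of a unital ℂ-star-algebra satisfy the `U_q(2)` relations. -/
def UqRel (q : ℂ) {A : Type*} [Ring A] [Algebra ℂ A] [StarRing A] (a b D : A) : Prop :=
  b * a = q • (a * b) ∧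
  star a * b = q • (b * star a) ∧
  b * star b = star b * b ∧
  a * star a + b * star b = 1 ∧
  star a * a + ((‖q‖ : ℂ) ^ 2) • (star b * b) = 1 ∧
  a * D = D * a ∧
  b * D = (q ^ 2 / (‖q‖ : ℂ) ^ 2) • (D * b) ∧
  D * star D = 1 ∧ star D * D = 1

lemma qPoch_succ (t : ℂ) (n : ℕ) : qPoch t t (n+1) = qPoch t t n * (1 - t * t ^ n) :=
  Finset.prod_range_succ _ n

lemma qPoch_factor_ne_zero {t : ℂ} (ht : ‖t‖ < 1) (r : ℕ) : (1 : ℂ) - t * t ^ r ≠ 0 := by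
  rw [sub_ne_zero]
  intro hcon
  have h1 : ‖t * t ^ r‖ = 1 := by rw [← hcon]; simp
  rw [norm_mul, norm_pow] at h1
  have h2 : ‖t‖ ^ r ≤ 1 := pow_le_one₀ (norm_nonneg t) ht.le
  nlinarith [norm_nonneg t]

lemma qPoch_ne_zero {t : ℂ} (ht : ‖t‖ < 1) (n : ℕ) : qPoch t t n ≠ 0 := by
  unfold qPoch
  exact Finset.prod_ne_zero_iff.mpr fun r _ => qPoch_factor_ne_zero ht r

lemma qBinom_zero {t : ℂ} (ht : ‖t‖ < 1) (n : ℕ) : qBinom t n 0 = 1 := by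
  unfold qBinom
  rw [show qPoch t t 0 = 1 from rfl, Nat.sub_zero, one_mul, div_self (qPoch_ne_zero ht n)]

lemma qBinom_self {t : ℂ} (ht : ‖t‖ < 1) (n : ℕ) : qBinom t n n = 1 := by
  unfold qBinom
  rw [Nat.sub_self, show qPoch t t 0 = 1 from rfl, mul_one, div_self (qPoch_ne_zero ht n)]

lemma qBinom_pascal₁ {t : ℂ} (ht : ‖t‖ < 1) {n k : ℕ} (hk1 : 1 ≤ k) (hkn : k ≤ n) :
    qBinom t (n+1) k = t ^ k * qBinom t n k + qBinom t n (k-1) := by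
  obtain ⟨j, rfl⟩ : ∃ j, k = j + 1 := ⟨k - 1, by omega⟩
  obtain ⟨l, rfl⟩ : ∃ l, n = j + 1 + l := ⟨n - (j+1), by omega⟩
  unfold qBinom
  rw [show j + 1 + l + 1 - (j + 1) = l + 1 by omega, show j + 1 + l - (j + 1) = l by omega,
    show j + 1 - 1 = j by omega, show j + 1 + l - j = l + 1 by omega,
    show j + 1 + l + 1 = (j + 1 + l) + 1 by omega, qPoch_succ, qPoch_succ t l, qPoch_succ t j]
  have h1 := qPoch_ne_zero ht j
  have h2 := qPoch_ne_zero ht l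
  have h3 := qPoch_factor_ne_zero ht j
  have h4 := qPoch_factor_ne_zero ht l
  field_simp
  ring

lemma qBinom_pascal₂ {t : ℂ} (ht : ‖t‖ < 1) {n k : ℕ} (hk1 : 1 ≤ k) (hkn : k ≤ n) :
    qBinom t (n+1) k = qBinom t n k + t ^ (n+1-k) * qBinom t n (k-1) := by
  obtain ⟨j, rfl⟩ : ∃ j, k = j + 1 := ⟨k - 1, by omega⟩
  obtain ⟨l, rfl⟩ : ∃ l, n = j + 1 + l := ⟨n - (j+1), by omega⟩
  unfold qBinom
  rw [show j + 1 + l + 1 - (j + 1) = l + 1 by omega, show j + 1 + l - (j + 1) = l by omega,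
    show j + 1 - 1 = j by omega, show j + 1 + l - j = l + 1 by omega,
    show j + 1 + l + 1 = (j + 1 + l) + 1 by omega, qPoch_succ, qPoch_succ t l, qPoch_succ t j]
  have h1 := qPoch_ne_zero ht j
  have h2 := qPoch_ne_zero ht l
  have h3 := qPoch_factor_ne_zero ht j
  have h4 := qPoch_factor_ne_zero ht l
  field_simp
  ring

lemma coef_f (Q : ℂ) (hQ : Q ≠ 0) (hT : ‖Q ^ 2‖ < 1) (m : ℕ) :
    ∀ k < m + 2,
      (-1 : ℂ) ^ k * qBinom (Q ^ 2) (m + 1) k *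
          Q ^ ((k : ℤ) ^ 2 + k - 2 * k * ((m + 1 : ℕ) : ℤ)) =
        (if k < m + 1 then
            (-1 : ℂ) ^ k * qBinom (Q ^ 2) m k * Q ^ ((k : ℤ) ^ 2 + k - 2 * k * (m : ℤ)) *
              ((Q ^ 2) ^ k)⁻¹
          else 0) -
          (if k = 0 then 0 else
            (-1 : ℂ) ^ (k - 1) * qBinom (Q ^ 2) m (k - 1) *
                Q ^ (((k - 1 : ℕ) : ℤ) ^ 2 + ((k - 1 : ℕ) : ℤ) - 2 * ((k - 1 : ℕ) : ℤ) * (m : ℤ)) *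
              ((Q ^ 2) ^ (k - 1))⁻¹) := by
  have hsplit : ∀ e1 e2 : ℕ, Q ^ ((e1 : ℤ) - (e2 : ℤ)) = Q ^ e1 / Q ^ e2 := fun e1 e2 => by
    rw [zpow_sub₀ hQ, zpow_natCast, zpow_natCast]
  intro k hk
  by_cases hk0 : k = 0
  · subst hk0
    simp [qBinom_zero hT]
  obtain ⟨j, rfl⟩ : ∃ j, k = j + 1 := ⟨k - 1, by omega⟩
  simp only [Nat.add_sub_cancel, if_neg hk0]
  by_cases hkm : j + 1 ≤ m
  · rw [if_pos (by omega), qBinom_pascal₂ hT (by omega) hkm, Nat.add_sub_cancel,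
      show m + 1 - (j + 1) = m - j by omega,
      show ((j + 1 : ℕ) : ℤ) ^ 2 + ((j + 1 : ℕ) : ℤ) - 2 * ((j + 1 : ℕ) : ℤ) * ((m + 1 : ℕ) : ℤ)
        = (((j + 1) ^ 2 + (j + 1) : ℕ) : ℤ) - ((2 * (j + 1) * (m + 1) : ℕ) : ℤ) by
          push_cast; ring,
      show ((j + 1 : ℕ) : ℤ) ^ 2 + ((j + 1 : ℕ) : ℤ) - 2 * ((j + 1 : ℕ) : ℤ) * (m : ℤ)
        = (((j + 1) ^ 2 + (j + 1) : ℕ) : ℤ) - ((2 * (j + 1) * m : ℕ) : ℤ) by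
          push_cast; ring,
      show ((j : ℕ) : ℤ) ^ 2 + ((j : ℕ) : ℤ) - 2 * ((j : ℕ) : ℤ) * (m : ℤ)
        = ((j ^ 2 + j : ℕ) : ℤ) - ((2 * j * m : ℕ) : ℤ) by
          push_cast; ring,
      hsplit, hsplit, hsplit,
      show m - j = (m - (j + 1)) + 1 by omega]
    obtain ⟨l, rfl⟩ : ∃ l, m = j + 1 + l := ⟨m - (j + 1), by omega⟩
    rw [show j + 1 + l - (j + 1) = l by omega]
    field_simp
    ring
  · have : j = m := by omega
    subst this
    rw [if_neg (by omega), qBinom_self hT, qBinom_self hT,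
      show ((j + 1 : ℕ) : ℤ) ^ 2 + ((j + 1 : ℕ) : ℤ) - 2 * ((j + 1 : ℕ) : ℤ) * ((j + 1 : ℕ) : ℤ)
        = (((j + 1) ^ 2 + (j + 1) : ℕ) : ℤ) - ((2 * (j + 1) * (j + 1) : ℕ) : ℤ) by
          push_cast; ring,
      show ((j : ℕ) : ℤ) ^ 2 + ((j : ℕ) : ℤ) - 2 * ((j : ℕ) : ℤ) * (j : ℤ)
        = ((j ^ 2 + j : ℕ) : ℤ) - ((2 * j * j : ℕ) : ℤ) by
          push_cast; ring,
      hsplit, hsplit]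
    field_simp
    ring

lemma coef_g (Q : ℂ) (hQ : Q ≠ 0) (hT : ‖Q ^ 2‖ < 1) (m : ℕ) :
    ∀ k < m + 2,
      (-1 : ℂ) ^ k * qBinom (Q ^ 2) (m + 1) k * Q ^ ((k : ℤ) ^ 2 + k) =
        (if k < m + 1 then
            (-1 : ℂ) ^ k * qBinom (Q ^ 2) m k * Q ^ ((k : ℤ) ^ 2 + k) * (Q ^ 2) ^ k
          else 0) -
          (if k = 0 then 0 else
            (-1 : ℂ) ^ (k - 1) * qBinom (Q ^ 2) m (k - 1) *
                Q ^ (((k - 1 : ℕ) : ℤ) ^ 2 + ((k - 1 : ℕ) : ℤ)) * (Q ^ 2) ^ ((k - 1) + 1)) := by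
  have hnat : ∀ e : ℕ, Q ^ ((e : ℤ)) = Q ^ e := fun e => zpow_natCast Q e
  intro k hk
  by_cases hk0 : k = 0
  · subst hk0
    simp [qBinom_zero hT]
  obtain ⟨j, rfl⟩ : ∃ j, k = j + 1 := ⟨k - 1, by omega⟩
  simp only [Nat.add_sub_cancel, if_neg hk0]
  rw [show ((j + 1 : ℕ) : ℤ) ^ 2 + ((j + 1 : ℕ) : ℤ) = (((j + 1) ^ 2 + (j + 1) : ℕ) : ℤ) by
        push_cast; ring,
    show ((j : ℕ) : ℤ) ^ 2 + ((j : ℕ) : ℤ) = ((j ^ 2 + j : ℕ) : ℤ) by push_cast; ring,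
    hnat, hnat]
  by_cases hkm : j + 1 ≤ m
  · rw [if_pos (by omega), qBinom_pascal₁ hT (by omega) hkm, Nat.add_sub_cancel]
    ring
  · have : j = m := by omega
    subst this
    rw [if_neg (by omega), qBinom_self hT, qBinom_self hT]
    ring

lemma sum_step {A : Type*} [Ring A] [Module ℂ A] (B : A) (m : ℕ) (c' c e : ℕ → ℂ)
    (hc : ∀ k < m + 2, c' k = (if k < m + 1 then c k else 0) - (if k = 0 then 0 else e (k - 1))) :
    ∑ k ∈ Finset.range (m + 2), c' k • B ^ k =
      (∑ k ∈ Finset.range (m + 1), c k • B ^ k) -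
        ∑ k ∈ Finset.range (m + 1), e k • B ^ (k + 1) := by
  have h1 : ∑ k ∈ Finset.range (m + 2), (if k < m + 1 then c k else 0) • B ^ k
      = ∑ k ∈ Finset.range (m + 1), c k • B ^ k := by
    rw [Finset.sum_range_succ, if_neg (lt_irrefl _), zero_smul, add_zero]
    exact Finset.sum_congr rfl fun k hk => by rw [if_pos (Finset.mem_range.mp hk)]
  have h2 : ∑ k ∈ Finset.range (m + 2), (if k = 0 then 0 else e (k - 1)) • B ^ k
      = ∑ k ∈ Finset.range (m + 1), e k • B ^ (k + 1) := by
    rw [Finset.sum_range_succ']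
    simp
  rw [← h1, ← h2, ← Finset.sum_sub_distrib]
  exact Finset.sum_congr rfl fun k hk => by rw [hc k (Finset.mem_range.mp hk), sub_smul]


/-- normal-ordering formulas for `aᵐ(a*)ᵐ` and `(a*)ᵐaᵐ` in terms of `bb*`. -/
theorem stmt8 {A : Type*} [Ring A] [Algebra ℂ A] [StarRing A] [StarModule ℂ A]
    (q : ℂ) (hq0 : 0 < ‖q‖) (hq1 : ‖q‖ < 1)
    (a b D : A) (h : UqRel q a b D) :
    ∀ m : ℕ,
      (a ^ m * (star a) ^ m =
        ∑ k ∈ Finset.range (m + 1),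
          ((-1 : ℂ) ^ k * qBinom ((‖q‖ : ℂ) ^ 2) m k *
            (‖q‖ : ℂ) ^ ((k : ℤ) ^ 2 + k - 2 * k * m)) • (b * star b) ^ k) ∧
      ((star a) ^ m * a ^ m =
        ∑ k ∈ Finset.range (m + 1),
          ((-1 : ℂ) ^ k * qBinom ((‖q‖ : ℂ) ^ 2) m k *
            (‖q‖ : ℂ) ^ ((k : ℤ) ^ 2 + k)) • (b * star b) ^ k) := by
  obtain ⟨hba, hab, hbb, h4, h5, -, -, -, -⟩ := h
  set Q : ℂ := (‖q‖ : ℂ) with hQdef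
  have hQ : Q ≠ 0 := Complex.ofReal_ne_zero.mpr hq0.ne'
  have hQ2 : Q ^ 2 ≠ 0 := pow_ne_zero 2 hQ
  have habs : ‖Q ^ 2‖ < 1 := by
    rw [norm_pow, hQdef, Complex.norm_real, Real.norm_eq_abs, _root_.abs_of_nonneg (norm_nonneg q)]
    nlinarith
  have hq2 : (starRingEnd ℂ) q * q = Q ^ 2 := by
    rw [mul_comm, Complex.mul_conj, hQdef, ← Complex.ofReal_pow, Complex.sq_norm]
  have hq2' : q * (starRingEnd ℂ) q = Q ^ 2 := by rw [mul_comm]; exact hq2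
  have hstar_ab : star b * a = (starRingEnd ℂ q) • (a * star b) := by
    have := congrArg star hab
    simpa [star_smul, Complex.star_def, mul_comm] using this
  have hstar_ba : star a * star b = (starRingEnd ℂ q) • (star b * star a) := by
    have := congrArg star hba
    simpa [star_smul, Complex.star_def, mul_comm] using this
  have hBa : b * star b * a = (Q ^ 2) • (a * (b * star b)) := by
    rw [mul_assoc, hstar_ab, mul_smul_comm, ← mul_assoc, hba, smul_mul_assoc, smul_smul,
      hq2, mul_assoc]
  have hsaB : star a * (b * star b) = (Q ^ 2) • ((b * star b) * star a) := by
    rw [← mul_assoc, hab, smul_mul_assoc, mul_assoc, hstar_ba, mul_smul_comm, smul_smul,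
      hq2', ← mul_assoc]
  have haa' : a * star a = 1 - b * star b := eq_sub_of_add_eq h4
  have hsaa' : star a * a = 1 - (Q ^ 2) • (b * star b) := by
    rw [← hbb] at h5; exact eq_sub_of_add_eq h5
  set B := b * star b with hB
  have hBka : ∀ k : ℕ, B ^ k * a = ((Q ^ 2) ^ k) • (a * B ^ k) := by
    intro k; induction k with
    | zero => simp
    | succ n ih =>
      rw [pow_succ, mul_assoc, hBa, mul_smul_comm, ← mul_assoc, ih, smul_mul_assoc,
        smul_smul, mul_assoc, ← pow_succ, ← pow_succ']
  have hsaBk : ∀ k : ℕ, star a * B ^ k = ((Q ^ 2) ^ k) • (B ^ k * star a) := by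
    intro k; induction k with
    | zero => simp
    | succ n ih =>
      rw [pow_succ, ← mul_assoc, ih, smul_mul_assoc, mul_assoc, hsaB, mul_smul_comm,
        smul_smul, ← mul_assoc, ← pow_succ]
  have haBk : ∀ k : ℕ, a * B ^ k = (((Q ^ 2) ^ k)⁻¹) • (B ^ k * a) := by
    intro k
    rw [eq_inv_smul_iff₀ (pow_ne_zero k hQ2), ← hBka]
  have key_f : ∀ k : ℕ, a * B ^ k * star a
      = (((Q ^ 2) ^ k)⁻¹) • B ^ k - (((Q ^ 2) ^ k)⁻¹) • B ^ (k + 1) := by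
    intro k
    rw [haBk k, smul_mul_assoc, mul_assoc, haa', mul_sub, mul_one, smul_sub, ← pow_succ]
  have key_g : ∀ k : ℕ, star a * B ^ k * a
      = ((Q ^ 2) ^ k) • B ^ k - ((Q ^ 2) ^ (k + 1)) • B ^ (k + 1) := by
    intro k
    rw [hsaBk k, smul_mul_assoc, mul_assoc, hsaa', mul_sub, mul_one, mul_smul_comm,
      smul_sub, smul_smul, ← pow_succ, ← pow_succ B k]
  intro m
  induction m with
  | zero =>
    constructor <;> simp [qBinom, qPoch]
  | succ m ih =>
    obtain ⟨ihf, ihg⟩ := ih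
    constructor
    · have expand : a ^ (m + 1) * (star a) ^ (m + 1) = a * (a ^ m * (star a) ^ m) * star a := by
        rw [pow_succ' a m, pow_succ (star a) m]
        simp only [mul_assoc]
      rw [expand, ihf, Finset.mul_sum, Finset.sum_mul]
      simp_rw [mul_smul_comm, smul_mul_assoc, key_f, smul_sub, smul_smul]
      rw [Finset.sum_sub_distrib]
      exact (sum_step B m _ _ _ (coef_f Q hQ habs m)).symm
    · have expand : (star a) ^ (m + 1) * a ^ (m + 1)
          = star a * ((star a) ^ m * a ^ m) * a := by
        rw [pow_succ' (star a) m, pow_succ a m]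
        simp only [mul_assoc]
      rw [expand, ihg, Finset.mul_sum, Finset.sum_mul]
      simp_rw [mul_smul_comm, smul_mul_assoc, key_g, smul_sub, smul_smul]
      rw [Finset.sum_sub_distrib]
      exact (sum_step B m _ _ _ (coef_g Q hQ habs m)).symm
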